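/- arXiv:2103.01024 — 3 statements merged into one kernel-verified Lean document; each statement's English description precedes it below -/
import Mathlib

section
/- For n×n max-plus matrices A (entries in ℝ ∪ {-∞}), B (entries in ℝ ∪ {+∞}) and a vector x with entries in ℝ ∪ {-∞}: the pair of inequalities A ⊗ x ⪯ x and x ⪯ B ⊙ x holds if and only if (A ⊕ B^♯) ⊗ x ⪯ x, where B^♯ is the negated transpose of B, ⊕ is entrywise max, ⊗ is max-plus matrix-vector product, and ⊙ is min-plus (dual) matrix-vector product. -/
/-!
For every `b : EReal`, `y ↦ -b + y` is left adjoint to `dualAdd b` on all of `EReal`, infinite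
values included. Hence both sides of the equivalence unfold to the same entrywise inequalities
`A i j + x j ≤ x i` and `-(B j i) + x j ≤ x i`.
-/

/-- Dual multiplication `⊙` on `ℝ̄ = ℝ ∪ {±∞}`: like `+`, but `+∞` is absorbing. -/
noncomputable def dualAdd (a b : EReal) : EReal := if a = ⊤ ∨ b = ⊤ then ⊤ else a + b

theorem neg_add_le_iff_le_dualAdd (b y z : EReal) : -b + y ≤ z ↔ y ≤ dualAdd b z := by
  unfold dualAdd
  split_ifs with h
  · rcases h with rfl | rfl <;> simp
  rw [not_or] at h
  obtain ⟨hb, hz⟩ := h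
  induction b using EReal.rec with
  | bot =>
    induction y using EReal.rec with
    | bot => simp
    | coe y => simpa using hz
    | top => simpa using hz
  | coe b =>
    rw [add_comm, ← sub_eq_add_neg, EReal.sub_le_iff_le_add (.inl (EReal.coe_ne_bot b))
      (.inl (EReal.coe_ne_top b)), add_comm]
  | top => exact absurd rfl hb

theorem stmt6_general {n : ℕ} (A B : Matrix (Fin n) (Fin n) EReal) (x : Fin n → EReal) :
    ((∀ i, (⨆ j, A i j + x j) ≤ x i) ∧ (∀ i, x i ≤ ⨅ j, dualAdd (B i j) (x j))) ↔
      (∀ i, (⨆ j, max (A i j) (-(B j i)) + x j) ≤ x i) := by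
  simp only [iSup_le_iff, le_iInf_iff, ← neg_add_le_iff_le_dualAdd, ← max_add_add_right,
    max_le_iff, forall_and]
  exact and_congr_right' forall_comm

/-- For max-plus matrices `A` (entries in `ℝ ∪ {-∞}`), `B` (entries in `ℝ ∪ {+∞}`) and a
vector `x` over `ℝ ∪ {-∞}`: `A ⊗ x ⪯ x` and `x ⪯ B ⊙ x` iff `(A ⊕ B♯) ⊗ x ⪯ x`. -/
theorem stmt6 {n : ℕ} (A B : Matrix (Fin n) (Fin n) EReal) (x : Fin n → EReal)
    (hA : ∀ i j, A i j ≠ ⊤) (hB : ∀ i j, B i j ≠ ⊥) (hx : ∀ i, x i ≠ ⊤) :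
    ((∀ i, (⨆ j, A i j + x j) ≤ x i) ∧ (∀ i, x i ≤ ⨅ j, dualAdd (B i j) (x j))) ↔
      (∀ i, (⨆ j, max (A i j) (-(B j i)) + x j) ≤ x i) :=
  stmt6_general A B x
end

section
/- For an n×n max-plus matrix A with entries in ℝ ∪ {-∞}, there exists a real vector x ∈ ℝⁿ satisfying A ⊗ x ⪯ x (i.e., for all i, j: A_ij + x_j ≤ x_i) if and only if the weighted directed graph G(A) (with an arc from j to i of weight A_ij whenever A_ij ≠ -∞) contains no circuit of positive total weight. -/
/-!
A subeigenvector `x` is a potential: every arc `j → i` has weight at most `x i - x j`, so the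
weight of a circuit is bounded by a telescoping sum, which vanishes.

Conversely, run the Bellman–Ford iteration for longest walks. If the values are stable after
`card ι` rounds, they form a subeigenvector. If some value still improves in round `card ι + 1`,
follow the arcs realising the maxima backwards through `card ι + 2` improving vertices; a repeated
vertex closes a circuit whose weight is the increase of the values along it, which is positive.
-/

open Finset

namespace WithBot

variable {G : Type*} [AddCommGroup G]

lemma add_coe_eq_coe_iff {a : WithBot G} {x y : G} : a + x = y ↔ a = ((y - x : G) : WithBot G) := by
  cases a <;> simp [← coe_add, eq_sub_iff_add_eq]

lemma add_coe_le_coe_iff [LinearOrder G] [IsOrderedAddMonoid G] {a : WithBot G} {x y : G} :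
    a + x ≤ y ↔ a ≤ ((y - x : G) : WithBot G) := by
  cases a <;> simp [← coe_add, le_sub_iff_add_le]

lemma sum_range_coe_sub (f : ℕ → G) (r : ℕ) :
    ∑ t ∈ range r, ((f (t + 1) - f t : G) : WithBot G) = ((f r - f 0 : G) : WithBot G) := by
  rw [← coe_sum, sum_range_sub]

end WithBot

lemma Fintype.exists_lt_map_eq_of_card_lt {ι : Type*} [Fintype ι] (p : ℕ → ι) {N : ℕ}
    (hN : Fintype.card ι < N) : ∃ s t, s < t ∧ t < N ∧ p s = p t := by
  obtain ⟨s, hs, t, ht, hne, hst⟩ := exists_ne_map_eq_of_card_lt_of_maps_to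
    (s := range N) (t := univ) (by simpa using hN) (fun a _ => mem_univ (p a))
  rw [mem_range] at hs ht
  rcases hne.lt_or_gt with h | h
  · exact ⟨s, t, h, ht, hst⟩
  · exact ⟨t, s, h, hs, hst.symm⟩

namespace MaxPlus

variable {ι G : Type*} [AddCommGroup G] [LinearOrder G]

def HasPosCircuit (A : Matrix ι ι (WithBot G)) : Prop :=
  ∃ (r : ℕ) (ρ : ℕ → ι), 1 ≤ r ∧ ρ r = ρ 0 ∧ 0 < ∑ t ∈ range r, A (ρ (t + 1)) (ρ t)

section Bellman

variable [Fintype ι] (A : Matrix ι ι (WithBot G))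

/-- `bellman A k i` is the largest weight of a walk of length at most `k` ending at `i`,
the empty walk having weight `0`. -/
noncomputable def bellman : ℕ → ι → WithBot G
  | 0 => fun _ => 0
  | k + 1 => fun i => bellman k i ⊔ univ.sup fun j => A i j + bellman k j

variable {A}

lemma bellman_succ (k : ℕ) (i : ι) :
    bellman A (k + 1) i = bellman A k i ⊔ univ.sup fun j => A i j + bellman A k j := rfl

lemma bellman_le_succ (k : ℕ) (i : ι) : bellman A k i ≤ bellman A (k + 1) i := le_sup_left

lemma bellman_mono (i : ι) : Monotone fun k => bellman A k i :=
  monotone_nat_of_le_succ fun k => bellman_le_succ k i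

lemma add_bellman_le_succ (k : ℕ) (i j : ι) : A i j + bellman A k j ≤ bellman A (k + 1) i :=
  (le_sup (f := fun j => A i j + bellman A k j) (mem_univ j)).trans le_sup_right

lemma coe_unbotD_bellman (k : ℕ) (i : ι) :
    (((bellman A k i).unbotD 0 : G) : WithBot G) = bellman A k i := by
  have : (0 : WithBot G) ≤ bellman A k i := bellman_mono i (Nat.zero_le k)
  lift bellman A k i to G using ne_bot_of_le_ne_bot WithBot.coe_ne_bot this with b
  rfl

lemma exists_bellman_succ_eq_add {k : ℕ} {i : ι} (h : bellman A k i < bellman A (k + 1) i) :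
    ∃ j, bellman A (k + 1) i = A i j + bellman A k j := by
  obtain ⟨j, -, hj⟩ := exists_mem_eq_sup univ ⟨i, mem_univ i⟩ fun j => A i j + bellman A k j
  refine ⟨j, ?_⟩
  rw [bellman_succ] at h ⊢
  rw [← hj, sup_eq_right.2 (le_of_not_ge (left_lt_sup.1 h))]

/-- If the value at `j` had been stable in round `k + 1`, the arc `j → i` could not raise the
value at `i` in round `k + 2`. -/
lemma bellman_lt_succ_of_succ_succ_eq_add {k : ℕ} {i j : ι}
    (h : bellman A (k + 1) i < bellman A (k + 2) i)
    (hj : bellman A (k + 2) i = A i j + bellman A (k + 1) j) :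
    bellman A k j < bellman A (k + 1) j := by
  refine (bellman_le_succ k j).lt_of_not_ge fun hstable => h.not_ge ?_
  rw [hj, ← le_antisymm (bellman_le_succ k j) hstable]
  exact add_bellman_le_succ k i j

lemma exists_bellman_chain {k : ℕ} {i : ι} (h : bellman A k i < bellman A (k + 1) i) :
    ∃ p : ℕ → ι, p (k + 1) = i ∧ ∀ m ≤ k,
      bellman A m (p (m + 1)) < bellman A (m + 1) (p (m + 1)) ∧
        bellman A (m + 1) (p (m + 1)) = A (p (m + 1)) (p m) + bellman A m (p m) := by
  induction k generalizing i with
  | zero =>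
    obtain ⟨j, hj⟩ := exists_bellman_succ_eq_add h
    refine ⟨fun m => if m = 0 then j else i, rfl, fun m hm => ?_⟩
    obtain rfl : m = 0 := Nat.le_zero.1 hm
    exact ⟨h, hj⟩
  | succ k ih =>
    obtain ⟨j, hj⟩ := exists_bellman_succ_eq_add h
    obtain ⟨p, hpj, hp⟩ := ih (bellman_lt_succ_of_succ_succ_eq_add h hj)
    refine ⟨Function.update p (k + 2) i, Function.update_self .., fun m hm => ?_⟩
    rcases hm.lt_or_eq with hm | rfl
    · rw [Function.update_of_ne (by omega), Function.update_of_ne (by omega)]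
      exact hp m (by omega)
    · rw [Function.update_self, Function.update_of_ne (by omega), hpj]
      exact ⟨h, hj⟩

end Bellman

variable [IsOrderedAddMonoid G] {A : Matrix ι ι (WithBot G)}

lemma not_hasPosCircuit_of_subeigenvector {x : ι → G}
    (hx : ∀ i j, A i j + (x j : WithBot G) ≤ (x i : WithBot G)) : ¬ HasPosCircuit A := by
  rintro ⟨r, ρ, -, hcirc, hpos⟩
  have hweight : ∑ t ∈ range r, A (ρ (t + 1)) (ρ t) ≤ 0 := calc
    _ ≤ ∑ t ∈ range r, ((x (ρ (t + 1)) - x (ρ t) : G) : WithBot G) :=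
      sum_le_sum fun t _ => WithBot.add_coe_le_coe_iff.1 (hx _ _)
    _ = 0 := (WithBot.sum_range_coe_sub (fun t => x (ρ t)) r).trans (by simp [hcirc])
  exact hpos.not_ge hweight

lemma hasPosCircuit_of_arc_eq_sub (p : ℕ → ι) (g : ℕ → G) {s t : ℕ}
    (hst : s < t) (hcyc : p s = p t)
    (harc : ∀ m, s ≤ m → m < t → A (p (m + 1)) (p m) = ((g (m + 1) - g m : G) : WithBot G))
    (hg : g s < g t) : HasPosCircuit A := by
  refine ⟨t - s, fun w => p (s + w), by omega, by simp [hcyc, Nat.add_sub_cancel' hst.le], ?_⟩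
  have hstep : ∀ w ∈ range (t - s), A (p (s + (w + 1))) (p (s + w)) =
      ((g (s + (w + 1)) - g (s + w) : G) : WithBot G) := fun w hw =>
    harc (s + w) (by omega) (by rw [mem_range] at hw; omega)
  have hweight : ∑ w ∈ range (t - s), A (p (s + (w + 1))) (p (s + w)) =
      ((g t - g s : G) : WithBot G) := by
    rw [sum_congr rfl hstep, WithBot.sum_range_coe_sub (fun w => g (s + w)),
      Nat.add_sub_cancel' hst.le, add_zero]
  rw [hweight, ← WithBot.coe_zero, WithBot.coe_lt_coe, sub_pos]
  exact hg

variable [Fintype ι]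

lemma hasPosCircuit_of_bellman_lt_succ {i : ι}
    (h : bellman A (Fintype.card ι) i < bellman A (Fintype.card ι + 1) i) : HasPosCircuit A := by
  obtain ⟨p, -, hp⟩ := exists_bellman_chain h
  obtain ⟨s, t, hst, ht, hcyc⟩ :=
    Fintype.exists_lt_map_eq_of_card_lt p (Nat.lt_add_of_pos_right two_pos)
  obtain ⟨t, rfl⟩ := Nat.exists_eq_succ_of_ne_zero (by omega : t ≠ 0)
  refine hasPosCircuit_of_arc_eq_sub p (fun m => (bellman A m (p m)).unbotD 0) hst hcyc
    (fun m _ hm => ?_) ?_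
  · rw [← WithBot.add_coe_eq_coe_iff, coe_unbotD_bellman, coe_unbotD_bellman]
    exact (hp m (by omega)).2.symm
  · rw [← WithBot.coe_lt_coe, coe_unbotD_bellman, coe_unbotD_bellman, hcyc]
    exact (bellman_mono _ (Nat.lt_succ_iff.1 hst)).trans_lt (hp t (by omega)).1

lemma exists_subeigenvector_of_not_hasPosCircuit (h : ¬ HasPosCircuit A) :
    ∃ x : ι → G, ∀ i j, A i j + (x j : WithBot G) ≤ (x i : WithBot G) := by
  refine ⟨fun i => (bellman A (Fintype.card ι) i).unbotD 0, fun i j => ?_⟩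
  rw [coe_unbotD_bellman, coe_unbotD_bellman]
  exact (add_bellman_le_succ _ i j).trans
    (not_lt.1 fun hlt => h (hasPosCircuit_of_bellman_lt_succ hlt))

end MaxPlus

/-- For an `n×n` max-plus matrix `A` over `ℝ ∪ {-∞}`, there exists `x ∈ ℝⁿ` with
`A ⊗ x ⪯ x` iff the precedence graph `G(A)` (arc from `j` to `i` of weight `Aᵢⱼ`
whenever `Aᵢⱼ ≠ -∞`) has no circuit of positive weight.  A circuit of length `r ≥ 1`
is encoded as `ρ : ℕ → Fin n` with `ρ r = ρ 0`; its weight `∑ t < r, A (ρ (t+1)) (ρ t)`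
is `> 0` in `WithBot ℝ` exactly when all its arcs exist and the total weight is positive. -/
theorem stmt9 {n : ℕ} (A : Matrix (Fin n) (Fin n) (WithBot ℝ)) :
    (∃ x : Fin n → ℝ, ∀ i j, A i j + (x j : WithBot ℝ) ≤ (x i : WithBot ℝ)) ↔
      ¬ ∃ (r : ℕ) (ρ : ℕ → Fin n), 1 ≤ r ∧ ρ r = ρ 0 ∧
          0 < ∑ t ∈ Finset.range r, A (ρ (t + 1)) (ρ t) :=
  ⟨fun ⟨_, hx⟩ => MaxPlus.not_hasPosCircuit_of_subeigenvector hx,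
    MaxPlus.exists_subeigenvector_of_not_hasPosCircuit⟩
end

section
/- Theorem: For every d ∈ ℕ, the set Λ_d of periods λ ≥ 0 for which a P-TEG admits a consistent d-periodic trajectory equals Λ₁, the set of periods for which it admits a consistent 1-periodic trajectory. -/
/-- A trajectory `x : ℕ → ℝⁿ` is consistent for the P-TEG `(A⁰, A¹, B⁰, B¹)` if it is
nondecreasing and for all `k`, `A⁰ ⊗ x(k) ⪯ x(k) ⪯ B⁰ ⊙ x(k)` and
`A¹ ⊗ x(k) ⪯ x(k+1) ⪯ B¹ ⊙ x(k)`. -/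
def Consistent {n : ℕ} (A0 A1 B0 B1 : Matrix (Fin n) (Fin n) EReal)
    (x : ℕ → Fin n → ℝ) : Prop :=
  ∀ k : ℕ,
    (∀ i, (⨆ j, A0 i j + (x k j : EReal)) ≤ (x k i : EReal)) ∧
    (∀ i, (x k i : EReal) ≤ ⨅ j, dualAdd (B0 i j) (x k j)) ∧
    (∀ i, (⨆ j, A1 i j + (x k j : EReal)) ≤ (x (k + 1) i : EReal)) ∧
    (∀ i, (x (k + 1) i : EReal) ≤ ⨅ j, dualAdd (B1 i j) (x k j)) ∧
    (∀ i, x k i ≤ x (k + 1) i)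

/-- `x` is `d`-periodic with period `λ`: `x(k+d) = dλ + x(k)` entrywise. -/
def DPeriodic {n : ℕ} (d : ℕ) (lam : ℝ) (x : ℕ → Fin n → ℝ) : Prop :=
  ∀ k i, x (k + d) i = (d : ℝ) * lam + x k i

lemma dualAdd_coe (b u : ℝ) : dualAdd (b : EReal) (u : ℝ) = ((b + u : ℝ) : EReal) := by
  rw [dualAdd, if_neg, EReal.coe_add]
  push_neg
  exact ⟨EReal.coe_ne_top b, EReal.coe_ne_top u⟩

/-- averaging preserves shifted inequalities -/
lemma avg_shift (d : ℕ) (hd : 0 < d) (a : ℝ) (f g : ℕ → ℝ)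
    (h : ∀ r < d, a + f r ≤ g r) :
    a + (∑ r ∈ Finset.range d, f r) / d ≤ (∑ r ∈ Finset.range d, g r) / d := by
  have hd' : (0 : ℝ) < d := by exact_mod_cast hd
  have h1 : ∑ r ∈ Finset.range d, (a + f r) ≤ ∑ r ∈ Finset.range d, g r :=
    Finset.sum_le_sum fun r hr => h r (Finset.mem_range.mp hr)
  rw [Finset.sum_add_distrib, Finset.sum_const, Finset.card_range, nsmul_eq_mul] at h1
  have h2 : ((d : ℝ) * a + ∑ r ∈ Finset.range d, f r) / d ≤
      (∑ r ∈ Finset.range d, g r) / d := by gcongr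
  calc a + (∑ r ∈ Finset.range d, f r) / d
      = ((d : ℝ) * a + ∑ r ∈ Finset.range d, f r) / d := by field_simp
    _ ≤ _ := h2

lemma avg_A_le (d : ℕ) (hd : 0 < d) (A : EReal) (hA : A ≠ ⊤) (f g : ℕ → ℝ)
    (h : ∀ r < d, A + (f r : EReal) ≤ (g r : EReal)) :
    A + (((∑ r ∈ Finset.range d, f r) / d : ℝ) : EReal) ≤
      (((∑ r ∈ Finset.range d, g r) / d : ℝ) : EReal) := by
  by_cases hb : A = ⊥
  · simp [hb]
  · obtain ⟨a, rfl⟩ : ∃ a : ℝ, A = (a : EReal) := ⟨A.toReal, (EReal.coe_toReal hA hb).symm⟩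
    have h' : ∀ r < d, a + f r ≤ g r := by
      intro r hr
      have := h r hr
      rw [← EReal.coe_add] at this
      exact_mod_cast this
    rw [← EReal.coe_add]
    exact_mod_cast avg_shift d hd a f g h'

lemma avg_le_B (d : ℕ) (hd : 0 < d) (B : EReal) (hB : B ≠ ⊥) (f g : ℕ → ℝ)
    (h : ∀ r < d, (f r : EReal) ≤ dualAdd B (g r)) :
    (((∑ r ∈ Finset.range d, f r) / d : ℝ) : EReal) ≤
      dualAdd B (((∑ r ∈ Finset.range d, g r) / d : ℝ)) := by
  by_cases ht : B = ⊤
  · simp [ht, dualAdd]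
  · obtain ⟨b, rfl⟩ : ∃ b : ℝ, B = (b : EReal) := ⟨B.toReal, (EReal.coe_toReal ht hB).symm⟩
    have h' : ∀ r < d, (-b) + f r ≤ g r := by
      intro r hr
      have := h r hr
      rw [dualAdd_coe] at this
      have := EReal.coe_le_coe_iff.mp this
      linarith
    rw [dualAdd_coe]
    have := avg_shift d hd (-b) f g h'
    apply EReal.coe_le_coe_iff.mpr
    linarith

/-- For every `d ∈ ℕ`, the set `Λ_d` of periods `λ ≥ 0` for which the P-TEG admits a
consistent `d`-periodic trajectory equals `Λ₁`. -/
theorem stmt16 {n : ℕ} (d : ℕ) (hd : 0 < d)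
    (A0 A1 B0 B1 : Matrix (Fin n) (Fin n) EReal)
    (hA0 : ∀ i j, A0 i j ≠ ⊤ ∧ (A0 i j ≠ ⊥ → 0 ≤ A0 i j))
    (hA1 : ∀ i j, A1 i j ≠ ⊤ ∧ (A1 i j ≠ ⊥ → 0 ≤ A1 i j))
    (hB0 : ∀ i j, B0 i j ≠ ⊥ ∧ (B0 i j ≠ ⊤ → 0 ≤ B0 i j))
    (hB1 : ∀ i j, B1 i j ≠ ⊥ ∧ (B1 i j ≠ ⊤ → 0 ≤ B1 i j)) :
    {lam : ℝ | 0 ≤ lam ∧ ∃ x : ℕ → Fin n → ℝ,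
        Consistent A0 A1 B0 B1 x ∧ DPeriodic d lam x} =
      {lam : ℝ | 0 ≤ lam ∧ ∃ x : ℕ → Fin n → ℝ,
        Consistent A0 A1 B0 B1 x ∧ DPeriodic 1 lam x} := by
  ext lam
  simp only [Set.mem_setOf_eq]
  constructor
  · rintro ⟨hlam, x, hcons, hper⟩
    refine ⟨hlam, fun k i => (∑ r ∈ Finset.range d, x (k + r) i) / d, ?_, ?_⟩
    · -- consistency of the averaged trajectory
      intro k
      have heq : ∀ i : Fin n, (∑ r ∈ Finset.range d, x (k + 1 + r) i)
          = ∑ r ∈ Finset.range d, x (k + r + 1) i := fun i =>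
        Finset.sum_congr rfl (fun r _ => by rw [show k + 1 + r = k + r + 1 by ring])
      refine ⟨?_, ?_, ?_, ?_, ?_⟩
      · intro i
        rw [iSup_le_iff]
        intro j
        exact avg_A_le d hd _ (hA0 i j).1 _ _ (fun r _ =>
          le_trans (le_iSup (fun j => A0 i j + ((x (k + r) j : ℝ) : EReal)) j) ((hcons (k + r)).1 i))
      · intro i
        rw [le_iInf_iff]
        intro j
        exact avg_le_B d hd _ (hB0 i j).1 _ _ (fun r _ =>
          le_trans ((hcons (k + r)).2.1 i) (iInf_le _ j))
      · intro i
        rw [iSup_le_iff]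
        intro j
        dsimp only
        rw [heq i]
        exact avg_A_le d hd _ (hA1 i j).1 (fun r => x (k + r) j) (fun r => x (k + r + 1) i)
          (fun r _ => le_trans (le_iSup (fun j => A1 i j + ((x (k + r) j : ℝ) : EReal)) j)
            ((hcons (k + r)).2.2.1 i))
      · intro i
        rw [le_iInf_iff]
        intro j
        dsimp only
        rw [heq i]
        exact avg_le_B d hd _ (hB1 i j).1 (fun r => x (k + r + 1) i) (fun r => x (k + r) j)
          (fun r _ => le_trans ((hcons (k + r)).2.2.2.1 i) (iInf_le _ j))
      · intro i
        dsimp only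
        rw [heq i]
        have hd' : (0 : ℝ) < d := by exact_mod_cast hd
        gcongr with r hr
        exact (hcons (k + r)).2.2.2.2 i
    · -- 1-periodicity of the averaged trajectory
      intro k i
      dsimp only
      have heq : (∑ r ∈ Finset.range d, x (k + 1 + r) i)
          = ∑ r ∈ Finset.range d, x (k + (r + 1)) i :=
        Finset.sum_congr rfl (fun r _ => by rw [show k + 1 + r = k + (r + 1) by ring])
      have key : ∑ r ∈ Finset.range d, x (k + (r + 1)) i
          = (∑ r ∈ Finset.range d, x (k + r) i) + (d : ℝ) * lam := by
        have h2 := (Finset.sum_range_succ' (fun r => x (k + r) i) d).symm.trans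
          (Finset.sum_range_succ (fun r => x (k + r) i) d)
        rw [hper k i] at h2
        simp only [Nat.add_zero] at h2
        linarith
      have hd' : (0 : ℝ) < d := by exact_mod_cast hd
      rw [heq, key]
      field_simp
      ring
  · rintro ⟨hlam, x, hcons, hper⟩
    refine ⟨hlam, x, hcons, ?_⟩
    intro k i
    have key : ∀ m : ℕ, x (k + m) i = (m : ℝ) * lam + x k i := by
      intro m
      induction m with
      | zero => simp
      | succ m ih =>
        have := hper (k + m) i
        rw [show k + (m + 1) = k + m + 1 by ring, this, ih]
        push_cast
        ring
    exact key d
end
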